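/- Traversal-order lemma: let g ≥ 2, d ≥ 2, p ≥ 2, n = g+p+d, and let d_1,…,d_{2n} be an embroidery of E_{g,p,d} in which the superior diagonal of the top-left cell G_1 is stitched at index 2. Then for every 1 ≤ i ≤ 2g the diagonal d_i is a diagonal of a left-staircase cell G_k; for every 2g+1 ≤ i ≤ 2(g+p) it is a diagonal of a landing cell P_j; and for every 2(g+p)+1 ≤ i ≤ 2n it is a diagonal of a right-staircase cell D_k. -/

import Mathlib

/-- Two vertices of `ℤ²` are adjacent if their Euclidean distance is `1`. -/
def Adj (u v : ℤ × ℤ) : Prop := (u.1 - v.1) ^ 2 + (u.2 - v.2) ^ 2 = 1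

/-- The inferior diagonal of the cell `(a, b)`: the unordered pair `{(a,b), (a+1,b+1)}`. -/
def infDiag (c : ℤ × ℤ) : Sym2 (ℤ × ℤ) := s(c, (c.1 + 1, c.2 + 1))

/-- The superior diagonal of the cell `(a, b)`: the unordered pair `{(a,b+1), (a+1,b)}`. -/
def supDiag (c : ℤ × ℤ) : Sym2 (ℤ × ℤ) := s((c.1, c.2 + 1), (c.1 + 1, c.2))

/-- The unordered pair underlying an ordered pair of vertices. -/
def diagOf (e : (ℤ × ℤ) × (ℤ × ℤ)) : Sym2 (ℤ × ℤ) := s(e.1, e.2)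

/-- `d 0, d 1, …, d (2n - 1)` (with `n = C.card`) is an embroidery of the
configuration `C`. -/
def IsEmbroidery (C : Finset (ℤ × ℤ)) (d : ℕ → (ℤ × ℤ) × (ℤ × ℤ)) : Prop :=
  (∀ i < 2 * C.card, ∃ c ∈ C, diagOf (d i) = infDiag c ∨ diagOf (d i) = supDiag c) ∧
  (∀ c ∈ C, ∃! i, i < 2 * C.card ∧ diagOf (d i) = infDiag c) ∧
  (∀ c ∈ C, ∃! i, i < 2 * C.card ∧ diagOf (d i) = supDiag c) ∧
  (∀ c ∈ C, ∀ i j, i < 2 * C.card → j < 2 * C.card →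
    diagOf (d i) = infDiag c → diagOf (d j) = supDiag c → i < j) ∧
  (∀ i, i + 1 < 2 * C.card → Adj (d i).2 (d (i + 1)).1)

/-- A closed embroidery: moreover the end of the last diagonal is adjacent to the
start of the first one. -/
def IsClosedEmbroidery (C : Finset (ℤ × ℤ)) (d : ℕ → (ℤ × ℤ) × (ℤ × ℤ)) : Prop :=
  IsEmbroidery C d ∧ Adj (d (2 * C.card - 1)).2 (d 0).1

/-- A configuration is brodable if it admits an embroidery. -/
def Brodable (C : Finset (ℤ × ℤ)) : Prop := ∃ d, IsEmbroidery C d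

/-- A configuration is strongly brodable if it admits a closed embroidery. -/
def StronglyBrodable (C : Finset (ℤ × ℤ)) : Prop := ∃ d, IsClosedEmbroidery C d

/-- The staircase with landing `E_{g,p,d}`:
`{(i, −i) : 0 ≤ i ≤ g−1} ∪ {(g−1+j, −g) : 1 ≤ j ≤ p} ∪ {(g+p+k−1, −g−k) : 1 ≤ k ≤ d}`. -/
def stairLanding (g p d : ℕ) : Finset (ℤ × ℤ) :=
  (Finset.range g).image (fun i : ℕ => ((i : ℤ), -(i : ℤ))) ∪
  (Finset.range p).image (fun j : ℕ => ((g : ℤ) + j, -(g : ℤ))) ∪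
  (Finset.range d).image (fun k : ℕ => ((g : ℤ) + p + k, -(g : ℤ) - 1 - k))

/-- `e` traverses a diagonal of the cell `c`. -/
def IsDiagOf (e : (ℤ × ℤ) × (ℤ × ℤ)) (c : ℤ × ℤ) : Prop :=
  diagOf e = infDiag c ∨ diagOf e = supDiag c

/-!
Consecutive stitches end and start at adjacent vertices, and the left staircase, the landing
and the right staircase come within distance one of each other only around the vertices
`(g, 1 - g)` and `(g + p, -g)`. Inspecting the few adjacent vertex pairs there shows: the
stitching can leave the left staircase for good only after the superior diagonal of `G_g`, and
can come back to it only on `G_g`; it enters the right staircase on `D_1`, by the inferior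
diagonal right after the superior diagonal of `P_p` or by the superior diagonal, and it leaves
it only after the superior diagonal of `D_1` or onto the superior diagonal of `P_p`. Since the
first stitch is the inferior diagonal of `G_1`, the left stitches form one initial run; the
right stitches form one final run, because after the inferior diagonal of `D_1` the next stitch
is the superior one, and `D_2` still has to be stitched. Counting diagonals, these runs have
lengths `2g` and `2d`, and the stitches in between are on the landing.
-/

open Finset

abbrev Stitch := (ℤ × ℤ) × (ℤ × ℤ)

theorem adj_iff {u v : ℤ × ℤ} :
    Adj u v ↔ (u.1 = v.1 ∧ (u.2 = v.2 + 1 ∨ v.2 = u.2 + 1)) ∨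
      (u.2 = v.2 ∧ (u.1 = v.1 + 1 ∨ v.1 = u.1 + 1)) := by
  obtain ⟨a, b⟩ := u
  obtain ⟨c, d⟩ := v
  simp only [Adj]
  constructor
  · intro h
    obtain ⟨x, rfl⟩ : ∃ x, a = c + x := ⟨a - c, by ring⟩
    obtain ⟨y, rfl⟩ : ∃ y, b = d + y := ⟨b - d, by ring⟩
    simp only [add_sub_cancel_left] at h
    have hx : -1 ≤ x ∧ x ≤ 1 := by constructor <;> nlinarith [sq_nonneg y]
    have hy : -1 ≤ y ∧ y ≤ 1 := by constructor <;> nlinarith [sq_nonneg x]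
    obtain ⟨hx₁, hx₂⟩ := hx
    obtain ⟨hy₁, hy₂⟩ := hy
    interval_cases x <;> interval_cases y <;> omega
  · rintro (⟨rfl, rfl | rfl⟩ | ⟨rfl, rfl | rfl⟩) <;> ring

-- Disjunction-free forms: `e.1` is a corner of the cell and `e.2` the opposite corner.
theorem diagOf_eq_infDiag_iff {e : Stitch} {x y : ℤ} : diagOf e = infDiag (x, y) ↔
    (x ≤ e.1.1 ∧ e.1.1 ≤ x + 1 ∧ e.1.2 - y = e.1.1 - x) ∧
      e.2.1 = 2 * x + 1 - e.1.1 ∧ e.2.2 = 2 * y + 1 - e.1.2 := by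
  obtain ⟨⟨a, b⟩, c, d⟩ := e
  simp only [diagOf, infDiag, Sym2.eq_iff, Prod.mk.injEq]
  omega

theorem diagOf_eq_supDiag_iff {e : Stitch} {x y : ℤ} : diagOf e = supDiag (x, y) ↔
    (x ≤ e.1.1 ∧ e.1.1 ≤ x + 1 ∧ e.1.2 - y = 1 - (e.1.1 - x)) ∧
      e.2.1 = 2 * x + 1 - e.1.1 ∧ e.2.2 = 2 * y + 1 - e.1.2 := by
  obtain ⟨⟨a, b⟩, c, d⟩ := e
  simp only [diagOf, supDiag, Sym2.eq_iff, Prod.mk.injEq]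
  omega

theorem isDiagOf_iff {e : Stitch} {x y : ℤ} : IsDiagOf e (x, y) ↔
    (x ≤ e.1.1 ∧ e.1.1 ≤ x + 1 ∧ y ≤ e.1.2 ∧ e.1.2 ≤ y + 1) ∧
      e.2.1 = 2 * x + 1 - e.1.1 ∧ e.2.2 = 2 * y + 1 - e.1.2 := by
  rw [IsDiagOf, diagOf_eq_infDiag_iff, diagOf_eq_supDiag_iff]
  omega

theorem IsDiagOf.unique {e : Stitch} {c c' : ℤ × ℤ} (h : IsDiagOf e c) (h' : IsDiagOf e c') :
    c = c' := by
  obtain ⟨x, y⟩ := c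
  obtain ⟨x', y'⟩ := c'
  rw [isDiagOf_iff] at h h'
  simp only [Prod.mk.injEq]
  omega

theorem infDiag_injective : Function.Injective infDiag := by
  rintro ⟨x, y⟩ ⟨x', y'⟩ h
  simp only [infDiag, Sym2.eq_iff, Prod.mk.injEq] at h ⊢
  omega

theorem supDiag_injective : Function.Injective supDiag := by
  rintro ⟨x, y⟩ ⟨x', y'⟩ h
  simp only [supDiag, Sym2.eq_iff, Prod.mk.injEq] at h ⊢
  omega

theorem infDiag_ne_supDiag (c c' : ℤ × ℤ) : infDiag c ≠ supDiag c' := by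
  obtain ⟨x, y⟩ := c
  obtain ⟨x', y'⟩ := c'
  simp only [infDiag, supDiag, ne_eq, Sym2.eq_iff, Prod.mk.injEq]
  omega

theorem Nat.forall_of_succ_of_le {Q : ℕ → Prop} {a n : ℕ} (ha : Q a)
    (hstep : ∀ m, a ≤ m → m + 1 < n → Q m → Q (m + 1)) :
    ∀ i, a ≤ i → i < n → Q i := by
  intro i hai
  induction i, hai using Nat.le_induction with
  | base => exact fun _ ↦ ha
  | succ m ham ih => exact fun hm ↦ hstep m ham hm (ih (by omega))

theorem Nat.exists_first_of_not_zero {Q : ℕ → Prop} {n : ℕ} (h0 : ¬ Q 0)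
    (h : ∃ i < n, Q i) :
    ∃ m, m + 1 < n ∧ Q (m + 1) ∧ ∀ i ≤ m, ¬ Q i := by
  classical
  obtain ⟨hn, hQ⟩ := Nat.find_spec h
  obtain ⟨m, hm⟩ := Nat.exists_eq_add_one_of_ne_zero fun h' ↦ h0 (h' ▸ hQ)
  rw [hm] at hn hQ
  exact ⟨m, hn, hQ, fun i hi hQi ↦ Nat.find_min h (by omega) ⟨by omega, hQi⟩⟩

namespace IsEmbroidery

variable {C S : Finset (ℤ × ℤ)} {e : ℕ → Stitch} {c : ℤ × ℤ} {i j : ℕ}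

theorem exists_infDiag (he : IsEmbroidery C e) (hc : c ∈ C) :
    ∃ i < 2 * #C, diagOf (e i) = infDiag c :=
  (he.2.1 c hc).exists

theorem exists_supDiag (he : IsEmbroidery C e) (hc : c ∈ C) :
    ∃ i < 2 * #C, diagOf (e i) = supDiag c :=
  (he.2.2.1 c hc).exists

theorem lt_of_infDiag_of_supDiag (he : IsEmbroidery C e) (hc : c ∈ C) (hi : i < 2 * #C)
    (hj : j < 2 * #C) (hinf : diagOf (e i) = infDiag c) (hsup : diagOf (e j) = supDiag c) :
    i < j :=
  he.2.2.2.1 c hc i j hi hj hinf hsup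

theorem add_one_lt_of_infDiag (he : IsEmbroidery C e) (hc : c ∈ C) (hi : i < 2 * #C)
    (hinf : diagOf (e i) = infDiag c) : i + 1 < 2 * #C := by
  obtain ⟨j, hj, hsup⟩ := he.exists_supDiag hc
  have := he.lt_of_infDiag_of_supDiag hc hi hj hinf hsup
  omega

theorem adj (he : IsEmbroidery C e) (hi : i + 1 < 2 * #C) : Adj (e i).2 (e (i + 1)).1 :=
  he.2.2.2.2 i hi

theorem eq_of_diagOf_eq (he : IsEmbroidery C e) (hi : i < 2 * #C) (hj : j < 2 * #C)
    (h : diagOf (e i) = diagOf (e j)) : i = j := by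
  obtain ⟨c, hc, hinf | hsup⟩ := he.1 i hi
  · exact (he.2.1 c hc).unique ⟨hi, hinf⟩ ⟨hj, h ▸ hinf⟩
  · exact (he.2.2.1 c hc).unique ⟨hi, hsup⟩ ⟨hj, h ▸ hsup⟩

theorem eq_or_eq_of_isDiagOf (he : IsEmbroidery C e) {i₁ i₂ : ℕ} (hi₁ : i₁ < 2 * #C)
    (hi₂ : i₂ < 2 * #C) (hi : i < 2 * #C) (hinf : diagOf (e i₁) = infDiag c)
    (hsup : diagOf (e i₂) = supDiag c) (h : IsDiagOf (e i) c) : i = i₁ ∨ i = i₂ := by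
  rcases h with h | h
  · exact Or.inl (he.eq_of_diagOf_eq hi hi₁ (h.trans hinf.symm))
  · exact Or.inr (he.eq_of_diagOf_eq hi hi₂ (h.trans hsup.symm))

theorem diagOf_zero_eq_infDiag (he : IsEmbroidery C e) (hc : c ∈ C)
    (h : diagOf (e 1) = supDiag c) : diagOf (e 0) = infDiag c := by
  have hC : 0 < #C := card_pos.2 ⟨c, hc⟩
  obtain ⟨i, hi, hinf⟩ := he.exists_infDiag hc
  obtain rfl : i = 0 := by
    have := he.lt_of_infDiag_of_supDiag hc hi (by omega) hinf h
    omega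
  exact hinf

open Classical in
theorem card_filter_isDiagOf (he : IsEmbroidery C e) (hS : S ⊆ C) :
    #{i ∈ range (2 * #C) | ∃ c ∈ S, IsDiagOf (e i) c} = 2 * #S := by
  set T : Finset ℕ := {i ∈ range (2 * #C) | ∃ c ∈ S, IsDiagOf (e i) c} with hT
  have himage : T.image (fun i ↦ diagOf (e i)) = S.image infDiag ∪ S.image supDiag := by
    ext q
    simp only [hT, mem_image, mem_filter, mem_range, mem_union]
    constructor
    · rintro ⟨i, ⟨-, c, hc, h | h⟩, rfl⟩
      exacts [Or.inl ⟨c, hc, h.symm⟩, Or.inr ⟨c, hc, h.symm⟩]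
    · rintro (⟨c, hc, rfl⟩ | ⟨c, hc, rfl⟩)
      · obtain ⟨i, hi, h⟩ := he.exists_infDiag (hS hc)
        exact ⟨i, ⟨hi, c, hc, Or.inl h⟩, h⟩
      · obtain ⟨i, hi, h⟩ := he.exists_supDiag (hS hc)
        exact ⟨i, ⟨hi, c, hc, Or.inr h⟩, h⟩
  have hdisj : Disjoint (S.image infDiag) (S.image supDiag) := by
    simp only [disjoint_left, mem_image]
    rintro _ ⟨c, -, rfl⟩ ⟨c', -, h⟩
    exact infDiag_ne_supDiag c c' h.symm
  have hinj : Set.InjOn (fun i ↦ diagOf (e i)) T :=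
    fun i hi j hj h ↦
      he.eq_of_diagOf_eq (mem_range.1 (mem_filter.1 hi).1) (mem_range.1 (mem_filter.1 hj).1) h
  rw [← card_image_of_injOn hinj, himage, card_union_of_disjoint hdisj,
    card_image_of_injective _ infDiag_injective, card_image_of_injective _ supDiag_injective,
    two_mul]

theorem two_mul_card_eq_sub (he : IsEmbroidery C e) (hS : S ⊆ C) {a b : ℕ} (hb : b ≤ 2 * #C)
    (h : ∀ i < 2 * #C, (∃ c ∈ S, IsDiagOf (e i) c) ↔ a ≤ i ∧ i < b) :
    2 * #S = b - a := by
  rw [← he.card_filter_isDiagOf hS, ← Nat.card_Ico]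
  congr 1
  ext i
  simp only [mem_filter, mem_range, mem_Ico]
  constructor
  · exact fun ⟨hi, hS⟩ ↦ (h i hi).1 hS
  · exact fun hi ↦ ⟨by omega, (h i (by omega)).2 hi⟩

end IsEmbroidery

-- `leftCell k`, `landingCell g j` and `rightCell g p k` are the cells `G_(k+1)`, `P_(j+1)`
-- and `D_(k+1)`.
def leftCell (k : ℕ) : ℤ × ℤ := ((k : ℤ), -(k : ℤ))

def landingCell (g j : ℕ) : ℤ × ℤ := ((g : ℤ) + j, -(g : ℤ))

def rightCell (g p k : ℕ) : ℤ × ℤ := ((g : ℤ) + p + k, -(g : ℤ) - 1 - k)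

def leftStair (g : ℕ) : Finset (ℤ × ℤ) := (range g).image leftCell

def landing (g p : ℕ) : Finset (ℤ × ℤ) := (range p).image (landingCell g)

def rightStair (g p d : ℕ) : Finset (ℤ × ℤ) := (range d).image (rightCell g p)

def IsLeftStitch (g : ℕ) (s : Stitch) : Prop := ∃ k < g, IsDiagOf s (leftCell k)

def IsLandingStitch (g p : ℕ) (s : Stitch) : Prop := ∃ j < p, IsDiagOf s (landingCell g j)

def IsRightStitch (g p d : ℕ) (s : Stitch) : Prop := ∃ k < d, IsDiagOf s (rightCell g p k)

section Staircase

variable {g p d : ℕ}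

theorem stairLanding_eq (g p d : ℕ) :
    stairLanding g p d = leftStair g ∪ landing g p ∪ rightStair g p d :=
  rfl

theorem leftCell_injective : Function.Injective leftCell := fun k k' h ↦ by
  simpa [leftCell] using congrArg Prod.fst h

theorem landingCell_injective (g : ℕ) : Function.Injective (landingCell g) := fun j j' h ↦ by
  simpa [landingCell] using congrArg Prod.fst h

theorem rightCell_injective (g p : ℕ) : Function.Injective (rightCell g p) := fun k k' h ↦ by
  simpa [rightCell] using congrArg Prod.fst h

theorem card_leftStair (g : ℕ) : #(leftStair g) = g := by
  rw [leftStair, card_image_of_injective _ leftCell_injective, card_range]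

theorem card_landing (g p : ℕ) : #(landing g p) = p := by
  rw [landing, card_image_of_injective _ (landingCell_injective g), card_range]

theorem card_rightStair (g p d : ℕ) : #(rightStair g p d) = d := by
  rw [rightStair, card_image_of_injective _ (rightCell_injective g p), card_range]

theorem card_stairLanding (g p d : ℕ) : #(stairLanding g p d) = g + p + d := by
  have hdisj₁ : Disjoint (leftStair g) (landing g p) := by
    simp only [leftStair, landing, disjoint_left, mem_image, mem_range]
    rintro _ ⟨k, hk, rfl⟩ ⟨j, -, h⟩
    simp only [leftCell, landingCell, Prod.mk.injEq] at h
    omega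
  have hdisj₂ : Disjoint (leftStair g ∪ landing g p) (rightStair g p d) := by
    simp only [leftStair, landing, rightStair, disjoint_left, mem_union, mem_image, mem_range]
    rintro _ (⟨k, hk, rfl⟩ | ⟨j, -, rfl⟩) ⟨k', -, h⟩ <;>
      simp only [leftCell, landingCell, rightCell, Prod.mk.injEq] at h <;> omega
  rw [stairLanding_eq, card_union_of_disjoint hdisj₂, card_union_of_disjoint hdisj₁,
    card_leftStair, card_landing, card_rightStair]

theorem leftStair_subset_stairLanding : leftStair g ⊆ stairLanding g p d :=
  subset_union_left.trans subset_union_left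

theorem rightStair_subset_stairLanding : rightStair g p d ⊆ stairLanding g p d :=
  subset_union_right

theorem leftCell_mem_stairLanding {k : ℕ} (hk : k < g) : leftCell k ∈ stairLanding g p d := by
  simp only [stairLanding_eq, leftStair, mem_union, mem_image, mem_range]
  exact Or.inl (Or.inl ⟨k, hk, rfl⟩)

theorem landingCell_mem_stairLanding {j : ℕ} (hj : j < p) :
    landingCell g j ∈ stairLanding g p d := by
  simp only [stairLanding_eq, landing, mem_union, mem_image, mem_range]
  exact Or.inl (Or.inr ⟨j, hj, rfl⟩)

theorem rightCell_mem_stairLanding {k : ℕ} (hk : k < d) :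
    rightCell g p k ∈ stairLanding g p d := by
  simp only [stairLanding_eq, rightStair, mem_union, mem_image, mem_range]
  exact Or.inr ⟨k, hk, rfl⟩

theorem isLeftStitch_iff_exists_mem {s : Stitch} :
    IsLeftStitch g s ↔ ∃ c ∈ leftStair g, IsDiagOf s c := by
  simp [IsLeftStitch, leftStair]

theorem isRightStitch_iff_exists_mem {s : Stitch} :
    IsRightStitch g p d s ↔ ∃ c ∈ rightStair g p d, IsDiagOf s c := by
  simp [IsRightStitch, rightStair]

theorem IsLandingStitch.not_isLeftStitch {s : Stitch} (h : IsLandingStitch g p s) :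
    ¬ IsLeftStitch g s := by
  rintro ⟨k, hk, hs⟩
  obtain ⟨j, -, hs'⟩ := h
  have := congrArg Prod.fst (hs.unique hs')
  simp only [leftCell, landingCell] at this
  omega

theorem IsLeftStitch.not_isRightStitch {s : Stitch} (h : IsLeftStitch g s) :
    ¬ IsRightStitch g p d s := by
  rintro ⟨k, -, hs⟩
  obtain ⟨k', hk', hs'⟩ := h
  have := congrArg Prod.fst (hs.unique hs')
  simp only [leftCell, rightCell] at this
  omega

end Staircase

section Transitions

variable {g p : ℕ} {e f : Stitch}

theorem not_adj_leftCell_rightCell {k k' : ℕ} (hp : 0 < p) (hk : k < g)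
    (he : IsDiagOf e (leftCell k)) (hf : IsDiagOf f (rightCell g p k')) :
    ¬ Adj e.2 f.1 ∧ ¬ Adj f.2 e.1 := by
  simp only [leftCell, rightCell, isDiagOf_iff, adj_iff] at *
  omega

theorem supDiag_of_adj_leftCell_landingCell {k j : ℕ} (hk : k < g) (he : IsDiagOf e (leftCell k))
    (hf : IsDiagOf f (landingCell g j)) (hadj : Adj e.2 f.1) :
    diagOf e = supDiag (leftCell (g - 1)) ∨ diagOf f = supDiag (landingCell g j) := by
  simp only [leftCell, landingCell, isDiagOf_iff, diagOf_eq_supDiag_iff, adj_iff] at *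
  omega

theorem eq_pred_of_adj_landingCell_leftCell {j k : ℕ} (hk : k < g)
    (he : IsDiagOf e (landingCell g j))
    (hf : IsDiagOf f (leftCell k)) (hadj : Adj e.2 f.1) : k = g - 1 := by
  simp only [leftCell, landingCell, isDiagOf_iff, adj_iff] at *
  omega

theorem diagOf_cases_of_adj_landingCell_rightCell {j k : ℕ} (hj : j < p)
    (he : IsDiagOf e (landingCell g j))
    (hf : IsDiagOf f (rightCell g p k)) (hadj : Adj e.2 f.1) :
    diagOf f = supDiag (rightCell g p 0) ∨
      diagOf f = infDiag (rightCell g p 0) ∧ diagOf e = supDiag (landingCell g (p - 1)) := by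
  simp only [landingCell, rightCell, isDiagOf_iff, diagOf_eq_infDiag_iff, diagOf_eq_supDiag_iff,
    adj_iff] at *
  omega

theorem supDiag_of_adj_rightCell_landingCell {k j : ℕ} (hj : j < p)
    (he : IsDiagOf e (rightCell g p k))
    (hf : IsDiagOf f (landingCell g j)) (hadj : Adj e.2 f.1) :
    diagOf e = supDiag (rightCell g p 0) ∨ diagOf f = supDiag (landingCell g (p - 1)) := by
  simp only [landingCell, rightCell, isDiagOf_iff, diagOf_eq_supDiag_iff, adj_iff] at *
  omega

theorem supDiag_of_adj_infDiag_rightCell_zero {k : ℕ} (he : diagOf e = infDiag (rightCell g p 0))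
    (hf : IsDiagOf f (rightCell g p k)) (hadj : Adj e.2 f.1) :
    diagOf f = supDiag (rightCell g p 0) ∨ diagOf f = supDiag (rightCell g p 1) := by
  simp only [rightCell, isDiagOf_iff, diagOf_eq_infDiag_iff, diagOf_eq_supDiag_iff, adj_iff] at *
  omega

end Transitions

section StairLandingEmbroidery

variable {g p d : ℕ} {e : ℕ → Stitch} {m : ℕ}

theorem isLeftStitch_or_isLandingStitch_or_isRightStitch
    (he : IsEmbroidery (stairLanding g p d) e) {i : ℕ} (hi : i < 2 * #(stairLanding g p d)) :
    IsLeftStitch g (e i) ∨ IsLandingStitch g p (e i) ∨ IsRightStitch g p d (e i) := by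
  obtain ⟨c, hc, h⟩ := he.1 i hi
  simp only [stairLanding, mem_union, mem_image, mem_range] at hc
  rcases hc with (⟨k, hk, rfl⟩ | ⟨j, hj, rfl⟩) | ⟨k, hk, rfl⟩
  exacts [Or.inl ⟨k, hk, h⟩, Or.inr (Or.inl ⟨j, hj, h⟩), Or.inr (Or.inr ⟨k, hk, h⟩)]

theorem diagOf_eq_supDiag_of_first_left_exit (he : IsEmbroidery (stairLanding g p d) e)
    (hp : 0 < p) (hm : m + 1 < 2 * #(stairLanding g p d))
    (hleft : ∀ i ≤ m, IsLeftStitch g (e i)) (hexit : ¬ IsLeftStitch g (e (m + 1))) :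
    diagOf (e m) = supDiag (leftCell (g - 1)) := by
  obtain ⟨k, hk, he'⟩ := hleft m le_rfl
  rcases isLeftStitch_or_isLandingStitch_or_isRightStitch he hm with
    hL | ⟨j, hj, hf⟩ | ⟨k', -, hf⟩
  · exact absurd hL hexit
  · refine (supDiag_of_adj_leftCell_landingCell hk he' hf (he.adj hm)).resolve_right
      fun hsup ↦ ?_
    have hmem : landingCell g j ∈ stairLanding g p d := landingCell_mem_stairLanding hj
    obtain ⟨i, hi, hinf⟩ := he.exists_infDiag hmem
    have := he.lt_of_infDiag_of_supDiag hmem hi hm hinf hsup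
    exact IsLandingStitch.not_isLeftStitch ⟨j, hj, Or.inl hinf⟩ (hleft i (by omega))
  · exact absurd (he.adj hm) (not_adj_leftCell_rightCell hp hk he' hf).1

theorem isDiagOf_leftCell_of_left_entry (he : IsEmbroidery (stairLanding g p d) e)
    (hp : 0 < p) (hm : m + 1 < 2 * #(stairLanding g p d)) (hnot : ¬ IsLeftStitch g (e m))
    (hentry : IsLeftStitch g (e (m + 1))) : IsDiagOf (e (m + 1)) (leftCell (g - 1)) := by
  obtain ⟨k, hk, hf⟩ := hentry
  rcases isLeftStitch_or_isLandingStitch_or_isRightStitch he (i := m) (by omega) with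
    hL | ⟨j, -, he'⟩ | ⟨k', -, he'⟩
  · exact absurd hL hnot
  · rwa [← eq_pred_of_adj_landingCell_leftCell hk he' hf (he.adj hm)]
  · exact absurd (he.adj hm) (not_adj_leftCell_rightCell hp hk hf he').2

theorem not_isLeftStitch_of_le (he : IsEmbroidery (stairLanding g p d) e) (hg : 0 < g)
    (hp : 0 < p) (hleft : ∀ i ≤ m, IsLeftStitch g (e i))
    (hexit : ¬ IsLeftStitch g (e (m + 1))) :
    ∀ i, m + 1 ≤ i → i < 2 * #(stairLanding g p d) → ¬ IsLeftStitch g (e i) := by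
  refine Nat.forall_of_succ_of_le hexit fun j hj hjN hnot hentry ↦ ?_
  have hmem : leftCell (g - 1) ∈ stairLanding g p d := leftCell_mem_stairLanding (by omega)
  have hsup := diagOf_eq_supDiag_of_first_left_exit he hp (by omega) hleft hexit
  obtain ⟨i, hi, hinf⟩ := he.exists_infDiag hmem
  have := he.lt_of_infDiag_of_supDiag hmem hi (by omega) hinf hsup
  have := he.eq_or_eq_of_isDiagOf hi (by omega) hjN hinf hsup
    (isDiagOf_leftCell_of_left_entry he hp hjN hnot hentry)
  omega

theorem isLeftStitch_iff (he : IsEmbroidery (stairLanding g p d) e) (hg : 0 < g) (hp : 0 < p)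
    (hstart : diagOf (e 1) = supDiag (leftCell 0)) {i : ℕ} (hi : i < 2 * #(stairLanding g p d)) :
    IsLeftStitch g (e i) ↔ i < 2 * g := by
  have h0 : IsLeftStitch g (e 0) :=
    ⟨0, hg, Or.inl (he.diagOf_zero_eq_infDiag (leftCell_mem_stairLanding hg) hstart)⟩
  have hmem : landingCell g 0 ∈ stairLanding g p d := landingCell_mem_stairLanding hp
  obtain ⟨m, hmN, hexit, hleft⟩ :=
    Nat.exists_first_of_not_zero (Q := fun i ↦ ¬ IsLeftStitch g (e i)) (not_not.2 h0) (by
      obtain ⟨a, ha, hinf⟩ := he.exists_infDiag hmem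
      exact ⟨a, ha, IsLandingStitch.not_isLeftStitch ⟨0, hp, Or.inl hinf⟩⟩)
  simp only [not_not] at hleft
  have hblock : ∀ i < 2 * #(stairLanding g p d), IsLeftStitch g (e i) ↔ 0 ≤ i ∧ i < m + 1 :=
    fun i hi ↦ ⟨fun h ↦ ⟨i.zero_le, by_contra fun hmi ↦
      not_isLeftStitch_of_le he hg hp hleft hexit i (by omega) hi h⟩,
      fun h ↦ hleft i (by omega)⟩
  have hcount := he.two_mul_card_eq_sub leftStair_subset_stairLanding hmN.le
    fun i hi ↦ isLeftStitch_iff_exists_mem.symm.trans (hblock i hi)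
  rw [card_leftStair] at hcount
  rw [hblock i hi]
  omega

theorem diagOf_cases_of_right_entry (he : IsEmbroidery (stairLanding g p d) e) (hp : 0 < p)
    (hm : m + 1 < 2 * #(stairLanding g p d)) (hnot : ¬ IsRightStitch g p d (e m))
    (hentry : IsRightStitch g p d (e (m + 1))) :
    diagOf (e (m + 1)) = supDiag (rightCell g p 0) ∨
      diagOf (e (m + 1)) = infDiag (rightCell g p 0) ∧
        diagOf (e m) = supDiag (landingCell g (p - 1)) := by
  obtain ⟨k, -, hf⟩ := hentry
  rcases isLeftStitch_or_isLandingStitch_or_isRightStitch he (i := m) (by omega) with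
    ⟨k', hk', he'⟩ | ⟨j, hj, he'⟩ | hR
  · exact absurd (he.adj hm) (not_adj_leftCell_rightCell hp hk' he' hf).1
  · exact diagOf_cases_of_adj_landingCell_rightCell hj he' hf (he.adj hm)
  · exact absurd hR hnot

theorem diagOf_cases_of_right_exit (he : IsEmbroidery (stairLanding g p d) e) (hp : 0 < p)
    (hm : m + 1 < 2 * #(stairLanding g p d)) (hR : IsRightStitch g p d (e m))
    (hexit : ¬ IsRightStitch g p d (e (m + 1))) :
    diagOf (e m) = supDiag (rightCell g p 0) ∨
      diagOf (e (m + 1)) = supDiag (landingCell g (p - 1)) := by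
  obtain ⟨k, -, he'⟩ := hR
  rcases isLeftStitch_or_isLandingStitch_or_isRightStitch he hm with
    ⟨k', hk', hf⟩ | ⟨j, hj, hf⟩ | hR
  · exact absurd (he.adj hm) (not_adj_leftCell_rightCell hp hk' hf he').2
  · exact supDiag_of_adj_rightCell_landingCell hj he' hf (he.adj hm)
  · exact absurd hR hexit

theorem diagOf_eq_of_first_right_entry (he : IsEmbroidery (stairLanding g p d) e) (hp : 0 < p)
    (hm : m + 1 < 2 * #(stairLanding g p d)) (hbefore : ∀ i ≤ m, ¬ IsRightStitch g p d (e i))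
    (hentry : IsRightStitch g p d (e (m + 1))) :
    diagOf (e (m + 1)) = infDiag (rightCell g p 0) ∧
      diagOf (e m) = supDiag (landingCell g (p - 1)) := by
  refine (diagOf_cases_of_right_entry he hp hm (hbefore m le_rfl) hentry).resolve_left
    fun hsup ↦ ?_
  obtain ⟨k, hk, -⟩ := hentry
  have hmem : rightCell g p 0 ∈ stairLanding g p d := rightCell_mem_stairLanding (by omega)
  obtain ⟨i, hi, hinf⟩ := he.exists_infDiag hmem
  have := he.lt_of_infDiag_of_supDiag hmem hi hm hinf hsup
  exact hbefore i (by omega) ⟨0, by omega, Or.inl hinf⟩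

theorem diagOf_add_two_eq_supDiag (he : IsEmbroidery (stairLanding g p d) e) (hp : 0 < p)
    (hd : 1 < d) (hm : m + 1 < 2 * #(stairLanding g p d))
    (hbefore : ∀ i ≤ m, ¬ IsRightStitch g p d (e i))
    (hinf : diagOf (e (m + 1)) = infDiag (rightCell g p 0))
    (hprev : diagOf (e m) = supDiag (landingCell g (p - 1))) :
    diagOf (e (m + 2)) = supDiag (rightCell g p 0) := by
  have hmem₁ : rightCell g p 1 ∈ stairLanding g p d := rightCell_mem_stairLanding hd
  have hm₂ := he.add_one_lt_of_infDiag (rightCell_mem_stairLanding (by omega)) hm hinf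
  have hR : IsRightStitch g p d (e (m + 2)) := by
    by_contra hexit
    rcases diagOf_cases_of_right_exit he hp hm₂ ⟨0, by omega, Or.inl hinf⟩ hexit with h | h
    · exact infDiag_ne_supDiag _ _ (hinf.symm.trans h)
    · have := he.eq_of_diagOf_eq hm₂ (by omega) (h.trans hprev.symm)
      omega
  obtain ⟨k, -, hf⟩ := hR
  refine (supDiag_of_adj_infDiag_rightCell_zero hinf hf (he.adj hm₂)).resolve_right
    fun hsup₁ ↦ ?_
  -- the inferior diagonal of `D_2` would have to be stitched at `m + 1`
  obtain ⟨i, hi, hinf₁⟩ := he.exists_infDiag hmem₁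
  have := he.lt_of_infDiag_of_supDiag hmem₁ hi hm₂ hinf₁ hsup₁
  obtain rfl : i = m + 1 := by
    by_contra
    exact hbefore i (by omega) ⟨1, hd, Or.inl hinf₁⟩
  exact (rightCell_injective g p).ne one_ne_zero (infDiag_injective (hinf₁.symm.trans hinf))

theorem not_isRightStitch_add_one (he : IsEmbroidery (stairLanding g p d) e) (hp : 0 < p)
    (hinf : diagOf (e (m + 1)) = infDiag (rightCell g p 0))
    (hsup : diagOf (e (m + 2)) = supDiag (rightCell g p 0)) {j : ℕ} (hj : m + 2 ≤ j)
    (hjN : j + 1 < 2 * #(stairLanding g p d)) (hnot : ¬ IsRightStitch g p d (e j)) :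
    ¬ IsRightStitch g p d (e (j + 1)) := by
  intro hR
  rcases diagOf_cases_of_right_entry he hp hjN hnot hR with h | ⟨h, -⟩
  · have := he.eq_of_diagOf_eq hjN (by omega) (h.trans hsup.symm)
    omega
  · have := he.eq_of_diagOf_eq hjN (by omega) (h.trans hinf.symm)
    omega

theorem eq_of_right_exit (he : IsEmbroidery (stairLanding g p d) e) (hp : 0 < p)
    (hprev : diagOf (e m) = supDiag (landingCell g (p - 1)))
    (hsup : diagOf (e (m + 2)) = supDiag (rightCell g p 0)) {j : ℕ} (hj : m < j)
    (hjN : j + 1 < 2 * #(stairLanding g p d)) (hR : IsRightStitch g p d (e j))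
    (hexit : ¬ IsRightStitch g p d (e (j + 1))) : j = m + 2 := by
  rcases diagOf_cases_of_right_exit he hp hjN hR hexit with h | h
  · exact he.eq_of_diagOf_eq (by omega) (by omega) (h.trans hsup.symm)
  · have := he.eq_of_diagOf_eq hjN (by omega) (h.trans hprev.symm)
    omega

theorem isRightStitch_of_le (he : IsEmbroidery (stairLanding g p d) e) (hp : 0 < p) (hd : 1 < d)
    (hm : m + 1 < 2 * #(stairLanding g p d)) (hbefore : ∀ i ≤ m, ¬ IsRightStitch g p d (e i))
    (hentry : IsRightStitch g p d (e (m + 1))) :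
    ∀ i, m + 1 ≤ i → i < 2 * #(stairLanding g p d) → IsRightStitch g p d (e i) := by
  obtain ⟨hinf, hprev⟩ := diagOf_eq_of_first_right_entry he hp hm hbefore hentry
  have hsup := diagOf_add_two_eq_supDiag he hp hd hm hbefore hinf hprev
  have hstay : m + 3 < 2 * #(stairLanding g p d) → IsRightStitch g p d (e (m + 3)) := by
    intro hm₃
    by_contra hnot
    have hgone := Nat.forall_of_succ_of_le (Q := fun j ↦ ¬ IsRightStitch g p d (e j)) hnot
      fun j hj hjN ↦ not_isRightStitch_add_one he hp hinf hsup (by omega) hjN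
    -- `D_2` must still be stitched, and `D_1` occupies `m + 1` and `m + 2`
    have hmem₁ : rightCell g p 1 ∈ stairLanding g p d := rightCell_mem_stairLanding hd
    obtain ⟨i, hi, hinf₁⟩ := he.exists_infDiag hmem₁
    have hmi : m + 1 ≤ i := by
      by_contra
      exact hbefore i (by omega) ⟨1, hd, Or.inl hinf₁⟩
    have hcell : ∀ j, IsDiagOf (e j) (rightCell g p 0) → i ≠ j := by
      rintro j hj rfl
      exact one_ne_zero (rightCell_injective g p (IsDiagOf.unique (Or.inl hinf₁) hj))
    have := hcell _ (Or.inl hinf)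
    have := hcell _ (Or.inr hsup)
    exact hgone i (by omega) hi ⟨1, hd, Or.inl hinf₁⟩
  refine Nat.forall_of_succ_of_le hentry fun j hj hjN hR ↦ by_contra fun hexit ↦ ?_
  obtain rfl := eq_of_right_exit he hp hprev hsup (by omega) hjN hR hexit
  exact hexit (hstay hjN)

theorem isRightStitch_iff (he : IsEmbroidery (stairLanding g p d) e) (hp : 0 < p) (hd : 1 < d)
    (h0 : ¬ IsRightStitch g p d (e 0)) {i : ℕ} (hi : i < 2 * #(stairLanding g p d)) :
    IsRightStitch g p d (e i) ↔ 2 * (g + p) ≤ i := by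
  have hmem : rightCell g p 0 ∈ stairLanding g p d := rightCell_mem_stairLanding (by omega)
  obtain ⟨m, hmN, hentry, hbefore⟩ :=
    Nat.exists_first_of_not_zero (Q := fun i ↦ IsRightStitch g p d (e i)) h0 (by
      obtain ⟨r, hr, hinf⟩ := he.exists_infDiag hmem
      exact ⟨r, hr, 0, by omega, Or.inl hinf⟩)
  have hblock : ∀ i < 2 * #(stairLanding g p d),
      IsRightStitch g p d (e i) ↔ m + 1 ≤ i ∧ i < 2 * #(stairLanding g p d) :=
    fun i hi ↦ ⟨fun h ↦ ⟨by_contra fun hmi ↦ hbefore i (by omega) h, hi⟩,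
      fun h ↦ isRightStitch_of_le he hp hd hmN hbefore hentry i h.1 h.2⟩
  have hcount := he.two_mul_card_eq_sub rightStair_subset_stairLanding le_rfl
    fun i hi ↦ isRightStitch_iff_exists_mem.symm.trans (hblock i hi)
  rw [card_rightStair] at hcount
  rw [hblock i hi]
  have := card_stairLanding g p d
  omega

end StairLandingEmbroidery

/-- Traversal-order lemma.  Let `g, p, d ≥ 2`, `n = g + p + d`, and let
`d' 0, …, d' (2n-1)` be an embroidery of `E_{g,p,d}` in which the superior diagonal of
the top-left cell `G₁ = (0, 0)` is stitched at (0-based) index `1` (1-based index `2`).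
Then the first `2g` diagonals belong to left-staircase cells, the next `2p` to landing
cells, and the last `2d` to right-staircase cells. -/
theorem stairLanding_traversal_order (g p d : ℕ) (hg : 2 ≤ g) (hp : 2 ≤ p) (hd : 2 ≤ d)
    (d' : ℕ → (ℤ × ℤ) × (ℤ × ℤ)) (hemb : IsEmbroidery (stairLanding g p d) d')
    (hstart : diagOf (d' 1) = supDiag ((0 : ℤ), (0 : ℤ))) :
    (∀ i < 2 * g, ∃ k < g, IsDiagOf (d' i) ((k : ℤ), -(k : ℤ))) ∧
    (∀ i, 2 * g ≤ i → i < 2 * (g + p) →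
      ∃ j < p, IsDiagOf (d' i) ((g : ℤ) + j, -(g : ℤ))) ∧
    (∀ i, 2 * (g + p) ≤ i → i < 2 * (g + p + d) →
      ∃ k < d, IsDiagOf (d' i) ((g : ℤ) + p + k, -(g : ℤ) - 1 - k)) := by
  have hN := card_stairLanding g p d
  have hleft (i : ℕ) (hi : i < 2 * (g + p + d)) : IsLeftStitch g (d' i) ↔ i < 2 * g :=
    isLeftStitch_iff hemb (by omega) (by omega) hstart (by omega)
  have hright (i : ℕ) (hi : i < 2 * (g + p + d)) :
      IsRightStitch g p d (d' i) ↔ 2 * (g + p) ≤ i :=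
    isRightStitch_iff hemb (by omega) (by omega)
      ((hleft 0 (by omega)).2 (by omega)).not_isRightStitch (by omega)
  refine ⟨fun i hi ↦ (hleft i (by omega)).2 hi, fun i hi₁ hi₂ ↦ ?_,
    fun i hi₁ hi₂ ↦ (hright i hi₂).2 hi₁⟩
  rcases isLeftStitch_or_isLandingStitch_or_isRightStitch hemb (i := i) (by omega) with
    hL | hP | hR
  · exact absurd ((hleft i (by omega)).1 hL) (by omega)
  · exact hP
  · exact absurd ((hright i (by omega)).1 hR) (by omega)
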